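/- arXiv:0904.2872 — 3 statements merged into one kernel-verified Lean document; each statement's English description precedes it below -/
import Mathlib

section
/- Every nonempty factor U of the Tribonacci word t (the fixed point of the morphism τ: 0↦01, 1↦02, 2↦0) can be written in one of the forms τ(u), 0⁻¹τ(u), τ(u)0, or 0⁻¹τ(u)0 for some factor u of t. -/
/-!
Since `t = τ(t)`, the word `t` is the concatenation of the blocks `τ(t m) ∈ {01, 02, 0}`, each
of which begins with `0` and has length at most two. Hence every position of `t` is a block start
or one past a block start. Cutting a factor at the block starts at or just before its two ends
writes it as `τ(u)` for a factor `u`, possibly with the leading `0` of the first block removed and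
with the leading `0` of the next block appended.
-/

/-- The Tribonacci morphism τ: 0↦01, 1↦02, 2↦0, extended to words. -/
def tau : List (Fin 3) → List (Fin 3) :=
  fun w => w.flatMap (fun a => if a = 0 then [0, 1] else if a = 1 then [0, 2] else [0])

/-- The Tribonacci word, the fixed point of τ starting with 0.
Since τⁿ(0) is a prefix of τⁿ⁺¹(0) and |τ^(n+1)(0)| > n, this is well defined. -/
def trib : ℕ → Fin 3 := fun n => (tau^[n + 1] [0]).getD n 0

/-- `u` is a (finite, contiguous) factor of the Tribonacci word. -/
def IsFactor (u : List (Fin 3)) : Prop :=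
  ∃ i : ℕ, u = (List.range u.length).map (fun j => trib (i + j))

open List

lemma tau_append (u v : List (Fin 3)) : tau (u ++ v) = tau u ++ tau v :=
  flatMap_append ..

lemma tau_zero_cons (w : List (Fin 3)) : tau (0 :: w) = 0 :: 1 :: tau w := rfl

lemma List.IsPrefix.tau {u v : List (Fin 3)} (h : u <+: v) : tau u <+: tau v :=
  h.flatMap _

lemma exists_tau_singleton_eq_zero_cons (a : Fin 3) :
    ∃ w, tau [a] = 0 :: w ∧ w.length ≤ 1 := by
  fin_cases a <;> simp [tau]

lemma length_le_length_tau (w : List (Fin 3)) : w.length ≤ (tau w).length := by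
  induction w with
  | nil => rfl
  | cons a w ih =>
    obtain ⟨v, hv, -⟩ := exists_tau_singleton_eq_zero_cons a
    rw [← singleton_append, tau_append, hv]
    simp only [length_append, length_cons, length_nil]
    omega

def tribPrefix (k : ℕ) : List (Fin 3) := tau^[k] [0]

lemma tribPrefix_succ (k : ℕ) : tribPrefix (k + 1) = tau (tribPrefix k) :=
  Function.iterate_succ_apply' ..

lemma tribPrefix_prefix_succ (k : ℕ) : tribPrefix k <+: tribPrefix (k + 1) := by
  induction k with
  | zero => exact ⟨[1], rfl⟩
  | succ k ih => simpa only [tribPrefix_succ] using ih.tau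

lemma tribPrefix_prefix {k l : ℕ} (h : k ≤ l) : tribPrefix k <+: tribPrefix l := by
  induction l, h using Nat.le_induction with
  | base => exact prefix_refl _
  | succ l _ ih => exact ih.trans (tribPrefix_prefix_succ l)

lemma lt_length_tribPrefix (k : ℕ) : k < (tribPrefix k).length := by
  induction k with
  | zero => simp [tribPrefix]
  | succ k ih =>
    obtain ⟨w, hw⟩ : ∃ w, tribPrefix k = 0 :: w := by
      obtain ⟨w, hw⟩ := tribPrefix_prefix (Nat.zero_le k)
      exact ⟨w, hw.symm⟩
    have := length_le_length_tau w
    rw [hw] at ih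
    rw [tribPrefix_succ, hw, tau_zero_cons]
    simp only [length_cons] at ih ⊢
    omega

lemma getElem_tribPrefix {k n : ℕ} (h : n < (tribPrefix k).length) :
    (tribPrefix k)[n] = trib n := by
  have hn : n < (tribPrefix (n + 1)).length := (lt_length_tribPrefix (n + 1)).trans' (by omega)
  change _ = (tribPrefix (n + 1)).getD n 0
  rw [getD_eq_getElem _ _ hn]
  rcases le_total k (n + 1) with hk | hk
  · exact (tribPrefix_prefix hk).getElem h
  · exact ((tribPrefix_prefix hk).getElem hn).symm

def tribFactor (i n : ℕ) : List (Fin 3) := (range n).map fun j => trib (i + j)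

@[simp] lemma length_tribFactor (i n : ℕ) : (tribFactor i n).length = n := by
  simp [tribFactor]

lemma isFactor_tribFactor (i n : ℕ) : IsFactor (tribFactor i n) :=
  ⟨i, by rw [length_tribFactor]; rfl⟩

lemma tribFactor_add (i a b : ℕ) :
    tribFactor i (a + b) = tribFactor i a ++ tribFactor (i + a) b := by
  simp only [tribFactor, range_add, map_append, map_map, Function.comp_def, Nat.add_assoc]

lemma tribFactor_succ (i n : ℕ) : tribFactor i (n + 1) = tribFactor i n ++ [trib (i + n)] :=
  tribFactor_add i n 1

lemma tribFactor_succ' (i n : ℕ) : tribFactor i (n + 1) = trib i :: tribFactor (i + 1) n := by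
  rw [Nat.add_comm n, tribFactor_add]
  rfl

lemma tribFactor_zero_eq_take {k m : ℕ} (h : m ≤ (tribPrefix k).length) :
    tribFactor 0 m = (tribPrefix k).take m :=
  ext_getElem (by simpa using h) fun j hj _ => by
    simp [tribFactor, getElem_tribPrefix (lt_of_lt_of_le (by simpa using hj) h)]

lemma tau_tribFactor_zero (m : ℕ) :
    tau (tribFactor 0 m) = tribFactor 0 (tau (tribFactor 0 m)).length := by
  have hm : m ≤ (tribPrefix m).length := (lt_length_tribPrefix m).le
  have hpre : tau (tribFactor 0 m) <+: tribPrefix (m + 1) := by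
    rw [tribFactor_zero_eq_take hm, tribPrefix_succ]
    exact (take_prefix _ _).tau
  rw [tribFactor_zero_eq_take hpre.length_le]
  exact prefix_iff_eq_take.mp hpre

/-- Since `t = τ(t)`, the block `τ(t m)` occupies the positions
`[blockStart m, blockStart (m + 1))` of `t`. -/
def blockStart (m : ℕ) : ℕ := (tau (tribFactor 0 m)).length

lemma blockStart_add (p k : ℕ) :
    blockStart (p + k) = blockStart p + (tau (tribFactor p k)).length := by
  rw [blockStart, tribFactor_add, tau_append, length_append, Nat.zero_add]
  rfl

lemma tau_tribFactor (p k : ℕ) :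
    tau (tribFactor p k) = tribFactor (blockStart p) (tau (tribFactor p k)).length := by
  have h := tau_tribFactor_zero (p + k)
  rw [tribFactor_add, tau_append, length_append, tribFactor_add, ← tau_tribFactor_zero] at h
  simp only [Nat.zero_add] at h
  exact append_cancel_left h

lemma blockStart_succ (m : ℕ) : blockStart (m + 1) = blockStart m + (tau [trib m]).length := by
  rw [blockStart_add]
  rfl

lemma trib_blockStart (m : ℕ) : trib (blockStart m) = 0 := by
  obtain ⟨w, hw, -⟩ := exists_tau_singleton_eq_zero_cons (trib m)
  have h := tau_tribFactor m 1
  rw [show tribFactor m 1 = [trib m] from rfl, hw, length_cons, tribFactor_succ'] at h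
  exact (cons_eq_cons.mp h).1.symm

lemma blockStart_lt_succ (m : ℕ) : blockStart m < blockStart (m + 1) := by
  obtain ⟨w, hw, -⟩ := exists_tau_singleton_eq_zero_cons (trib m)
  rw [blockStart_succ, hw, length_cons]
  omega

lemma blockStart_succ_le (m : ℕ) : blockStart (m + 1) ≤ blockStart m + 2 := by
  obtain ⟨w, hw, hlen⟩ := exists_tau_singleton_eq_zero_cons (trib m)
  rw [blockStart_succ, hw, length_cons]
  omega

lemma blockStart_strictMono : StrictMono blockStart :=
  strictMono_nat_of_lt_succ blockStart_lt_succ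

lemma exists_eq_blockStart_or_succ (i : ℕ) :
    ∃ p, i = blockStart p ∨ i = blockStart p + 1 := by
  induction i with
  | zero => exact ⟨0, .inl rfl⟩
  | succ i ih =>
    obtain ⟨p, rfl | rfl⟩ := ih
    · exact ⟨p, .inr rfl⟩
    · have := blockStart_lt_succ p
      have := blockStart_succ_le p
      exact ⟨p + 1, by omega⟩

lemma zero_cons_tribFactor (p n : ℕ) :
    0 :: tribFactor (blockStart p + 1) n = tribFactor (blockStart p) (n + 1) := by
  rw [tribFactor_succ', trib_blockStart]

lemma tribFactor_append_zero {i : ℕ} (r : ℕ) (h : i ≤ blockStart r) :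
    tribFactor i (blockStart r - i) ++ [0] = tribFactor i (blockStart r - i + 1) := by
  rw [tribFactor_succ, Nat.add_sub_cancel' h, trib_blockStart]

theorem tribonacci_factor_desubstitution :
    ∀ U : List (Fin 3), IsFactor U → U ≠ [] →
      ∃ u : List (Fin 3), IsFactor u ∧
        (U = tau u ∨ (0 : Fin 3) :: U = tau u ∨ U = tau u ++ [0] ∨
          (0 : Fin 3) :: U = tau u ++ [0]) := by
  rintro U ⟨i, hU⟩ hne
  set n := U.length
  change U = tribFactor i n at hU
  have hn : 0 < n := length_pos_iff.mpr hne
  obtain ⟨p, hi⟩ := exists_eq_blockStart_or_succ i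
  obtain ⟨r, he⟩ := exists_eq_blockStart_or_succ (i + n)
  have hpr : p ≤ r := blockStart_strictMono.le_iff_le.mp (by omega)
  have hlen : (tau (tribFactor p (r - p))).length = blockStart r - blockStart p := by
    have := blockStart_add p (r - p)
    rw [Nat.add_sub_cancel' hpr] at this
    omega
  refine ⟨tribFactor p (r - p), isFactor_tribFactor p (r - p), ?_⟩
  rw [tau_tribFactor, hlen, hU]
  rcases hi with rfl | rfl <;> rcases he with he | he
  · left; congr 1; omega
  · right; right; left
    rw [tribFactor_append_zero r (by omega)]; congr 1; omega
  · right; left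
    rw [zero_cons_tribFactor]; congr 1; omega
  · right; right; right
    rw [zero_cons_tribFactor, tribFactor_append_zero r (by omega)]; congr 1; omega
end

section
/- Every natural number N has a unique Zeckendorf-type Tribonacci representation N = Σ_{k≥0} p_k T_k with p_k ∈ {0,1}, only finitely many p_k nonzero, and such that p_k = p_{k-1} = 1 implies p_{k-2} = 0 (for k ≥ 2), and no two consecutive indices among the first two may both be 1 together with the third, i.e., there are never three consecutive 1's. -/
/-- The Tribonacci numbers. -/
def T : ℕ → ℕ
  | 0 => 1
  | 1 => 2
  | 2 => 4
  | (k + 3) => T (k + 2) + T (k + 1) + T k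

/-! An admissible digit string supported below `n` has value `< T n`: split off its top block of
at most two `1`s and use `T (n + 3) = T (n + 2) + T (n + 1) + T n`. So the highest digit of an
admissible representation of `N` is forced, which gives uniqueness. Existence is the greedy
algorithm: with `T m ≤ N < T (m + 1)`, represent `N - T m < T m` and add the digit `m`; the
remainder cannot contain both `T (m - 2)` and `T (m - 1)`, as these and `T m` add up to
`T (m + 1) > N`. -/

open Finset

theorem T_add_three (k : ℕ) : T (k + 3) = T (k + 2) + T (k + 1) + T k := rfl

theorem T_pos : ∀ k, 0 < T k
  | 0 | 1 | 2 => by decide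
  | k + 3 => by rw [T_add_three]; have := T_pos k; omega

theorem T_lt_T_succ : ∀ k, T k < T (k + 1)
  | 0 | 1 => by decide
  | k + 2 => by rw [T_add_three]; have := T_pos k; have := T_pos (k + 1); omega

theorem T_strictMono : StrictMono T := strictMono_nat_of_lt_succ T_lt_T_succ

theorem T_succ_le_two_mul : ∀ k, T (k + 1) ≤ 2 * T k
  | 0 | 1 | 2 => by decide
  | k + 3 => by
    show T (k + 4) ≤ 2 * T (k + 3)
    have : T (k + 4) = T (k + 3) + T (k + 2) + T (k + 1) := rfl
    have := T_add_three k
    omega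

theorem exists_T_le_lt_T_succ {N : ℕ} (hN : 0 < N) : ∃ m, T m ≤ N ∧ N < T (m + 1) := by
  have hex : ∃ n, N < T n := ⟨N + 1, (Nat.lt_succ_self N).trans_le (T_strictMono.id_le _)⟩
  obtain ⟨m, hm⟩ : ∃ m, Nat.find hex = m + 1 :=
    Nat.exists_eq_add_one.mpr (Nat.pos_of_ne_zero fun h => (h ▸ Nat.find_spec hex).not_ge hN)
  exact ⟨m, not_lt.mp (Nat.find_min hex (by omega)), hm ▸ Nat.find_spec hex⟩

def Admissible (p : ℕ → ℕ) : Prop :=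
  (∀ k, p k ≤ 1) ∧ ∀ k, ¬(p k = 1 ∧ p (k + 1) = 1 ∧ p (k + 2) = 1)

namespace Admissible

variable {p q : ℕ → ℕ}

theorem zero : Admissible 0 := ⟨fun _ => zero_le_one, fun _ h => zero_ne_one h.1⟩

theorem eq_zero_or_eq_one (hp : Admissible p) (k : ℕ) : p k = 0 ∨ p k = 1 :=
  Nat.le_one_iff_eq_zero_or_eq_one.mp (hp.1 k)

theorem update_one (hp : Admissible p) {m : ℕ} (hm : ∀ k, m < k → p k = 0)
    (hpair : ∀ j, j + 2 = m → ¬(p j = 1 ∧ p (j + 1) = 1)) :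
    Admissible (Function.update p m 1) := by
  refine ⟨fun k => ?_, fun k => ?_⟩
  · rw [Function.update_apply]; split_ifs
    · rfl
    · exact hp.1 k
  · simp only [Function.update_apply]
    have := hp.2 k; have := hm (k + 1); have := hm (k + 2); have := hpair k
    split_ifs <;> omega

theorem sum_range_lt_T (hp : Admissible p) : ∀ n, ∑ k ∈ range n, p k * T k < T n
  | 0 => T_pos 0
  | 1 => by have := hp.1 0; simp only [range_one, sum_singleton, T]; omega
  | 2 => by
    have := hp.1 0; have := hp.1 1
    simp only [sum_range_succ, range_one, sum_singleton, T]; omega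
  | n + 3 => by
    rw [T_add_three]
    obtain h₂ | h₂ := hp.eq_zero_or_eq_one (n + 2)
    · have := hp.sum_range_lt_T (n + 2)
      have := T_pos n
      rw [sum_range_succ, h₂]; omega
    obtain h₁ | h₁ := hp.eq_zero_or_eq_one (n + 1)
    · have := hp.sum_range_lt_T (n + 1)
      rw [sum_range_succ, sum_range_succ, h₁, h₂]; omega
    have h₀ : p n = 0 := (hp.eq_zero_or_eq_one n).resolve_right fun h₀ => hp.2 n ⟨h₀, h₁, h₂⟩
    have := hp.sum_range_lt_T n
    rw [sum_range_succ, sum_range_succ, sum_range_succ, h₀, h₁, h₂]; omega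

theorem eq_of_sum_range_eq (hp : Admissible p) (hq : Admissible q) :
    ∀ n, ∑ k ∈ range n, p k * T k = ∑ k ∈ range n, q k * T k → ∀ k < n, p k = q k
  | 0, _, k, hk => absurd hk k.not_lt_zero
  | n + 1, h, k, hk => by
    rw [sum_range_succ, sum_range_succ] at h
    have hpn : p n = q n := by
      have := hp.sum_range_lt_T n; have := hq.sum_range_lt_T n
      rcases hp.eq_zero_or_eq_one n with h₀ | h₀ <;>
      rcases hq.eq_zero_or_eq_one n with h₁ | h₁ <;>
      simp only [h₀, h₁, zero_mul, one_mul] at h ⊢ <;> omega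
    rcases Nat.lt_succ_iff_lt_or_eq.mp hk with hk | rfl
    · exact eq_of_sum_range_eq hp hq n (by rw [hpn] at h; omega) k hk
    · exact hpn

end Admissible

theorem Admissible.eq_of_finsupp_sum_eq {p q : ℕ →₀ ℕ} (hp : Admissible p) (hq : Admissible q)
    (h : (p.sum fun k c => c * T k) = q.sum fun k c => c * T k) : p = q := by
  obtain ⟨n, hn⟩ := (p.support ∪ q.support).exists_nat_subset_range
  have hsum (r : ℕ →₀ ℕ) (hr : r.support ⊆ range n) :
      (r.sum fun k c => c * T k) = ∑ k ∈ range n, r k * T k :=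
    Finsupp.sum_of_support_subset r hr _ fun _ _ => zero_mul _
  rw [hsum p (subset_union_left.trans hn), hsum q (subset_union_right.trans hn)] at h
  ext k
  by_cases hk : k < n
  · exact hp.eq_of_sum_range_eq hq n h k hk
  · have hk' : k ∉ p.support ∪ q.support := fun h => hk (mem_range.mp (hn h))
    simp only [mem_union, Finsupp.mem_support_iff, not_or, not_not] at hk'
    rw [hk'.1, hk'.2]

theorem exists_admissible_finsupp_sum_eq (N : ℕ) :
    ∃ p : ℕ →₀ ℕ, Admissible p ∧ N = p.sum fun k c => c * T k := by
  refine Nat.strong_induction_on N fun N ih => ?_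
  obtain rfl | hN := N.eq_zero_or_pos
  · exact ⟨0, Admissible.zero, by simp⟩
  obtain ⟨m, hmN, hNm⟩ := exists_T_le_lt_T_succ hN
  obtain ⟨p, hp, hpN⟩ := ih (N - T m) (by have := T_pos m; omega)
  have hle (s : Finset ℕ) (hs : s ⊆ p.support) : ∑ k ∈ s, p k * T k ≤ N - T m :=
    hpN ▸ sum_le_sum_of_subset hs
  have hlt (k : ℕ) (hk : m ≤ k) : p k = 0 := by
    refine (hp.eq_zero_or_eq_one k).resolve_right fun hk₁ => ?_
    have : T k ≤ N - T m := by simpa [hk₁] using hle {k} (by simp [hk₁])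
    have := T_strictMono.monotone hk
    have := T_succ_le_two_mul m
    omega
  have hpair (j : ℕ) (hj : j + 2 = m) : ¬(p j = 1 ∧ p (j + 1) = 1) := by
    rintro ⟨hj₀, hj₁⟩
    subst hj
    have := hle {j, j + 1} (by simp [insert_subset_iff, hj₀, hj₁])
    rw [sum_pair (by omega), hj₀, hj₁] at this
    have : T (j + 2 + 1) = T (j + 2) + T (j + 1) + T j := rfl
    omega
  refine ⟨p.update m 1, ?_, ?_⟩
  · rw [Finsupp.coe_update]
    exact hp.update_one (fun k hk => hlt k hk.le) hpair
  · have := p.sum_update_add m 1 (fun k c => c * T k) (fun _ => zero_mul _) fun _ _ _ => add_mul _ _ _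
    rw [hlt m le_rfl] at this
    simp only [zero_mul, add_zero, one_mul] at this
    omega

theorem tribonacci_zeckendorf (N : ℕ) :
    ∃! p : ℕ →₀ ℕ, (∀ k, p k ≤ 1) ∧
      (∀ k, ¬(p k = 1 ∧ p (k + 1) = 1 ∧ p (k + 2) = 1)) ∧
      N = p.sum (fun k c => c * T k) := by
  obtain ⟨p, hp, hpN⟩ := exists_admissible_finsupp_sum_eq N
  refine ⟨p, ⟨hp.1, hp.2, hpN⟩, fun q hq => ?_⟩
  exact Admissible.eq_of_finsupp_sum_eq ⟨hq.1, hq.2.1⟩ hp (hq.2.2.symm.trans hpN)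
end

section
/- The Abelian complexity of the Tribonacci word satisfies ρ(1) = 3, ρ(2) = 3, ρ(3) = 4, and ρ(4) = 3. -/
noncomputable def rho (n : ℕ) : ℕ :=
  Set.ncard {v : Fin 3 → ℕ | ∃ u : List (Fin 3), IsFactor u ∧ u.length = n ∧
    ∀ a : Fin 3, u.count a = v a}

namespace List

variable {α β : Type*} {f : α → List β}

theorem length_le_length_flatMap (hf : ∀ a, f a ≠ []) (w : List α) :
    w.length ≤ (w.flatMap f).length := by
  induction w with
  | nil => simp
  | cons a w ih =>
    have := length_pos_iff.mpr (hf a)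
    simp only [flatMap_cons, length_append, length_cons]
    omega

theorem exists_prefix_of_prefix_flatMap (hf : ∀ a, f a ≠ []) {u : List β} :
    ∀ {w : List α}, u <+: w.flatMap f →
      ∃ v, v <+: w ∧ v.length ≤ u.length ∧ u <+: v.flatMap f
  | [], hu => ⟨[], prefix_refl _, by simp, hu⟩
  | a :: w, hu => by
    rcases eq_or_ne u [] with rfl | hne
    · exact ⟨[], nil_prefix, le_rfl, nil_prefix⟩
    rw [flatMap_cons] at hu
    rcases prefix_or_prefix_of_prefix hu (prefix_append (f a) _) with hua | ⟨u', rfl⟩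
    · exact ⟨[a], by simp, length_pos_iff.mpr hne, by simpa using hua⟩
    · obtain ⟨v, hvw, hvl, hv⟩ :=
        exists_prefix_of_prefix_flatMap hf ((prefix_append_right_inj _).mp hu)
      have := length_pos_iff.mpr (hf a)
      refine ⟨a :: v, by simpa using hvw, by simp only [length_cons, length_append]; omega, ?_⟩
      simpa using hv

theorem exists_infix_of_infix_flatMap (hf : ∀ a, f a ≠ []) {u : List β} :
    ∀ {w : List α}, u <:+: w.flatMap f →
      ∃ v, v <:+: w ∧ v.length ≤ u.length ∧ u <:+: v.flatMap f
  | [], hu => ⟨[], infix_refl _, by simp, hu⟩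
  | a :: w, hu => by
    rw [flatMap_cons, infix_append_iff_ne_nil] at hu
    rcases hu with hua | huw | ⟨u₁, u₂, hu₁, -, rfl, hsuf, hpre⟩
    · rcases eq_or_ne u [] with rfl | hne
      · exact ⟨[], nil_infix, le_rfl, nil_infix⟩
      exact ⟨[a], (prefix_append [a] w).isInfix, length_pos_iff.mpr hne, by simpa using hua⟩
    · obtain ⟨v, hvw, hvl, hv⟩ := exists_infix_of_infix_flatMap hf huw
      exact ⟨v, hvw.trans (infix_cons (infix_refl w)), hvl, hv⟩
    · obtain ⟨v, hvw, hvl, hv⟩ := exists_prefix_of_prefix_flatMap hf hpre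
      have := length_pos_iff.mpr hu₁
      refine ⟨a :: v, (by simpa using hvw : a :: v <+: a :: w).isInfix,
        by simp only [length_cons, length_append]; omega, ?_⟩
      obtain ⟨s, hs⟩ := hsuf
      obtain ⟨t, ht⟩ := hv
      exact ⟨s, t, by simp [← hs, ← ht]⟩

def infixes (l : List α) : List (List α) := l.tails.flatMap inits

theorem mem_infixes {u l : List α} : u ∈ infixes l ↔ u <:+: l := by
  simp only [infixes, mem_flatMap, mem_tails, mem_inits, infix_iff_prefix_suffix]
  tauto

end List

theorem tau_letter_ne_nil (a : Fin 3) :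
    (if a = 0 then [0, 1] else if a = 1 then [0, 2] else [0] : List (Fin 3)) ≠ [] := by
  split_ifs <;> simp

theorem exists_infix_of_infix_tau {u w : List (Fin 3)} (hu : u <:+: tau w) :
    ∃ v, v <:+: w ∧ v.length ≤ u.length ∧ u <:+: tau v :=
  List.exists_infix_of_infix_flatMap tau_letter_ne_nil hu

def pref (k : ℕ) : List (Fin 3) := tau^[k] [0]

theorem pref_succ (k : ℕ) : pref (k + 1) = tau (pref k) :=
  Function.iterate_succ_apply' tau k [0]

theorem pref_prefix_pref_succ (k : ℕ) : pref k <+: pref (k + 1) := by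
  induction k with
  | zero => exact ⟨[1], rfl⟩
  | succ k ih => rw [pref_succ, pref_succ (k + 1)]; exact ih.flatMap _

theorem pref_prefix_pref {k m : ℕ} (h : k ≤ m) : pref k <+: pref m := by
  induction m, h using Nat.le_induction with
  | base => exact List.prefix_refl _
  | succ m _ ih => exact ih.trans (pref_prefix_pref_succ m)

theorem lt_length_pref (k : ℕ) : k < (pref k).length := by
  induction k with
  | zero => simp [pref]
  | succ k ih =>
    obtain ⟨c, hc⟩ : [0] <+: pref k := pref_prefix_pref (Nat.zero_le k)
    have hk : k < c.length + 1 := by simpa [← hc, Nat.add_comm] using ih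
    have hc_le : c.length ≤ (tau c).length := List.length_le_length_flatMap tau_letter_ne_nil c
    have htau : tau ([0] ++ c) = [0, 1] ++ tau c := rfl
    rw [pref_succ, ← hc, htau, List.length_append]
    simp only [List.length_cons, List.length_nil]
    omega

theorem getElem_pref {k n : ℕ} (hn : n < (pref k).length) : (pref k)[n] = trib n := by
  have hn' : n < (pref (n + 1)).length := (lt_length_pref (n + 1)).trans' (by omega)
  show _ = (pref (n + 1)).getD n 0
  rw [List.getD_eq_getElem _ _ hn']
  rcases le_total k (n + 1) with h | h
  · exact (pref_prefix_pref h).getElem hn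
  · exact ((pref_prefix_pref h).getElem hn').symm

theorem isFactor_iff_exists_infix_pref {u : List (Fin 3)} :
    IsFactor u ↔ ∃ k, u <:+: pref k := by
  simp only [List.infix_iff_getElem?]
  constructor
  · rintro ⟨i, hu⟩
    refine ⟨i + u.length, i, by have := lt_length_pref (i + u.length); omega, fun j hj => ?_⟩
    rw [List.getElem?_eq_getElem (by have := lt_length_pref (i + u.length); omega),
      getElem_pref, List.getElem_of_eq hu hj]
    simp [Nat.add_comm]
  · rintro ⟨k, i, hle, hu⟩
    refine ⟨i, List.ext_getElem (by simp) fun j hj _ => ?_⟩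
    have := hu j hj
    rw [List.getElem?_eq_getElem (by omega), getElem_pref] at this
    simp [← Option.some_inj.mp this, Nat.add_comm]

theorem infix_pref_of_infix_tau_closed {n k : ℕ}
    (hclosed : ∀ v, v <:+: pref k → v.length ≤ n → ∀ u, u <:+: tau v → u.length ≤ n →
      u <:+: pref k) {m : ℕ} {u : List (Fin 3)} (hu : u <:+: pref m) (hn : u.length ≤ n) :
    u <:+: pref k := by
  induction m generalizing u with
  | zero => exact hu.trans (pref_prefix_pref (Nat.zero_le k)).isInfix
  | succ m ih =>
    rw [pref_succ] at hu
    obtain ⟨v, hv, hvu, huv⟩ := exists_infix_of_infix_tau hu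
    exact hclosed v (ih hv (hvu.trans hn)) (hvu.trans hn) u huv hn

theorem infix_pref_five_of_isFactor {u : List (Fin 3)} (hu : IsFactor u) (hn : u.length ≤ 4) :
    u <:+: pref 5 := by
  obtain ⟨m, hm⟩ := isFactor_iff_exists_infix_pref.mp hu
  refine infix_pref_of_infix_tau_closed (fun v hv hvn w hw hwn => ?_) hm hn
  have key : ∀ v ∈ List.infixes (pref 5), v.length ≤ 4 →
      ∀ w ∈ List.infixes (tau v), w.length ≤ 4 → w <:+: pref 5 := by
    decide +kernel
  exact key v (List.mem_infixes.mpr hv) hvn w (List.mem_infixes.mpr hw) hwn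

def parikh (u : List (Fin 3)) : Fin 3 → ℕ := fun a => u.count a

theorem rho_eq_card_parikh_infixes {n k : ℕ}
    (h : ∀ u, IsFactor u → u.length = n → u <:+: pref k) :
    rho n = (((List.infixes (pref k)).filter (·.length = n)).map parikh).toFinset.card := by
  rw [rho, ← Set.ncard_coe_finset]
  congr 1
  ext v
  simp only [Set.mem_ofPred_eq, Finset.mem_coe, List.mem_toFinset, List.mem_map, List.mem_filter,
    List.mem_infixes, decide_eq_true_eq]
  constructor
  · rintro ⟨u, hu, hn, hv⟩
    exact ⟨u, ⟨h u hu hn, hn⟩, funext hv⟩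
  · rintro ⟨u, ⟨hu, hn⟩, rfl⟩
    exact ⟨u, isFactor_iff_exists_infix_pref.mpr ⟨k, hu⟩, hn, fun _ => rfl⟩

theorem rho_eq_card_parikh_infixes_pref_five {n : ℕ} (hn : n ≤ 4) :
    rho n = (((List.infixes (pref 5)).filter (·.length = n)).map parikh).toFinset.card :=
  rho_eq_card_parikh_infixes fun _ hu hlen => infix_pref_five_of_isFactor hu (hlen.trans_le hn)

theorem tribonacci_abelian_complexity_small_values :
    rho 1 = 3 ∧ rho 2 = 3 ∧ rho 3 = 4 ∧ rho 4 = 3 := by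
  refine ⟨?_, ?_, ?_, ?_⟩ <;>
    rw [rho_eq_card_parikh_infixes_pref_five (by norm_num)] <;> decide +kernel
end
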